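/- If G is a finite connected vd-graph with at least two vertices, then its bipartite double G × K₂ is a vd-graph. -/

import Mathlib

open SimpleGraph

/-- The bipartite double `B(G) = G × K₂` of a graph `G`: vertices are `V(G) × {0,1}`,
and `(x,a)` is adjacent to `(y,b)` iff `a ≠ b` and `x` is adjacent to `y` in `G`. -/
def bipartiteDouble {V : Type*} (G : SimpleGraph V) : SimpleGraph (V × Bool) where
  Adj x y := x.2 ≠ y.2 ∧ G.Adj x.1 y.1
  symm := ⟨fun _ _ h => ⟨h.1.symm, h.2.symm⟩⟩
  loopless := ⟨fun _ h => h.1 rfl⟩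

/-!
The neighbours of `(v, a)` in `G × K₂` are exactly the `(u, !a)` with `u ~ v`. So once `v` has a
neighbour (which connectivity and `|V| ≥ 2` guarantee), the neighbourhood of `(v, a)` determines
the layer `a`, and on the opposite layer it is a copy of `N(v)`, which determines `v`.
-/

section

variable {V : Type*} {G : SimpleGraph V}

@[simp]
lemma bipartiteDouble_adj {x y : V × Bool} :
    (bipartiteDouble G).Adj x y ↔ x.2 ≠ y.2 ∧ G.Adj x.1 y.1 :=
  Iff.rfl

lemma bipartiteDouble_neighborSet_injective (hvd : Function.Injective G.neighborSet)
    (hnb : ∀ v, ∃ u, G.Adj v u) : Function.Injective (bipartiteDouble G).neighborSet := by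
  rintro ⟨v, a⟩ ⟨w, b⟩ h
  have hmem (u : V) : G.Adj v u ↔ (u, !a) ∈ (bipartiteDouble G).neighborSet (w, b) := by
    rw [← h]; simp
  obtain ⟨u, hu⟩ := hnb v
  have hab : a = b := by
    simpa [eq_comm] using ((hmem u).1 hu).1
  subst hab
  have hN : G.neighborSet v = G.neighborSet w := by
    ext u; simpa using hmem u
  rw [hvd hN]

end

/-- If `G` is a finite connected vd-graph with at least two vertices, then
its bipartite double `G × K₂` is a vd-graph. -/
theorem stmt_12 {V : Type*} [Fintype V] (G : SimpleGraph V)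
    (hconn : G.Connected) (hcard : 2 ≤ Fintype.card V)
    (hvd : ∀ v w : V, G.neighborSet v = G.neighborSet w → v = w) :
    ∀ x y : V × Bool, (bipartiteDouble G).neighborSet x = (bipartiteDouble G).neighborSet y →
      x = y := by
  have : Nontrivial V := Fintype.one_lt_card_iff_nontrivial.1 hcard
  exact fun _ _ h => bipartiteDouble_neighborSet_injective (fun v w => hvd v w)
    hconn.preconnected.exists_adj_of_nontrivial h
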